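/- arXiv:2311.09052 — 5 statements merged into one kernel-verified Lean document; each statement's English description precedes it below -/
import Mathlib

section
/- Let X and Y be independent nonnegative random variables on a probability space with Y > 0 almost surely. Then E[ln(1 + X/Y)] = ∫₀^∞ (1/z) · (1 − E[e^{−zX}]) · E[e^{−zY}] dz, where both sides are interpreted as values in [0, ∞] (the integrand on the right is nonnegative for every z > 0). -/
open MeasureTheory ProbabilityTheory Set Real

/-!
Writing `1 + x / y = (x + y) / y`, Frullani's integral for the exponential gives
`log (1 + x / y) = ∫₀^∞ z⁻¹ (1 - e^{-z x}) e^{-z y} dz` for `x ≥ 0`, `y > 0`; it follows from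
`z⁻¹ (e^{-z a} - e^{-z b}) = ∫_a^b e^{-z t} dt` and Tonelli. Taking expectations, Tonelli
exchanges `E` with `∫ dz`, and independence factors the expectation of the product
`(1 - e^{-z X}) e^{-z Y}` into the Laplace transforms.
-/

lemma lintegral_Ioi_exp_neg_mul {t : ℝ} (ht : 0 < t) :
    ∫⁻ z in Ioi (0 : ℝ), ENNReal.ofReal (exp (-z * t)) = ENNReal.ofReal (1 / t) := by
  have hint : IntegrableOn (fun z => exp (-t * z)) (Ioi 0) := exp_neg_integrableOn_Ioi 0 ht
  simp_rw [neg_mul, mul_comm _ t, ← neg_mul]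
  rw [← ofReal_integral_eq_lintegral_ofReal hint (ae_of_all _ fun z => (exp_pos _).le),
    integral_exp_mul_Ioi (neg_lt_zero.2 ht)]
  simp

lemma ofReal_one_div_mul_exp_sub_exp {z a b : ℝ} (hz : 0 < z) (hab : a ≤ b) :
    ENNReal.ofReal ((1 / z) * (exp (-z * a) - exp (-z * b)))
      = ∫⁻ t in Ioc a b, ENNReal.ofReal (exp (-z * t)) := by
  have hI : ∫ t in a..b, exp (-z * t) = (1 / z) * (exp (-z * a) - exp (-z * b)) := by
    rw [intervalIntegral.integral_comp_mul_left (fun t => exp t) (neg_ne_zero.2 hz.ne'),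
      integral_exp, smul_eq_mul, inv_neg, one_div]
    ring
  rw [← hI, intervalIntegral.integral_of_le hab,
    ofReal_integral_eq_lintegral_ofReal (by fun_prop : Continuous _).integrableOn_Ioc
      (ae_of_all _ fun t => (exp_pos _).le)]

lemma lintegral_Ioc_one_div {a b : ℝ} (ha : 0 < a) (hab : a ≤ b) :
    ∫⁻ t in Ioc a b, ENNReal.ofReal (1 / t) = ENNReal.ofReal (log (b / a)) := by
  have hint : IntervalIntegrable (fun t : ℝ => 1 / t) volume a b :=
    intervalIntegral.intervalIntegrable_one_div
      (fun t ht => ((lt_min ha (ha.trans_le hab)).trans_le ht.1).ne') continuousOn_id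
  rw [← integral_one_div_of_pos ha (ha.trans_le hab), intervalIntegral.integral_of_le hab,
    ofReal_integral_eq_lintegral_ofReal ((intervalIntegrable_iff_integrableOn_Ioc_of_le hab).1 hint)
      ((ae_restrict_iff' measurableSet_Ioc).2 (ae_of_all _ fun t ht =>
        (one_div_pos.2 (ha.trans ht.1)).le))]

lemma lintegral_Ioi_one_div_mul_exp_sub_exp {a b : ℝ} (ha : 0 < a) (hab : a ≤ b) :
    ∫⁻ z in Ioi (0 : ℝ), ENNReal.ofReal ((1 / z) * (exp (-z * a) - exp (-z * b)))
      = ENNReal.ofReal (log (b / a)) :=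
  calc _ = ∫⁻ z in Ioi (0 : ℝ), ∫⁻ t in Ioc a b, ENNReal.ofReal (exp (-z * t)) :=
        setLIntegral_congr_fun measurableSet_Ioi fun _ hz => ofReal_one_div_mul_exp_sub_exp hz hab
    _ = ∫⁻ t in Ioc a b, ∫⁻ z in Ioi (0 : ℝ), ENNReal.ofReal (exp (-z * t)) :=
        lintegral_lintegral_swap (by fun_prop)
    _ = ∫⁻ t in Ioc a b, ENNReal.ofReal (1 / t) :=
        setLIntegral_congr_fun measurableSet_Ioc fun _ ht =>
          lintegral_Ioi_exp_neg_mul (ha.trans ht.1)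
    _ = _ := lintegral_Ioc_one_div ha hab

lemma ofReal_log_one_add_div_eq_lintegral {x y : ℝ} (hx : 0 ≤ x) (hy : 0 < y) :
    ENNReal.ofReal (log (1 + x / y))
      = ∫⁻ z in Ioi (0 : ℝ), ENNReal.ofReal ((1 / z) * (1 - exp (-z * x)) * exp (-z * y)) := by
  have hfactor : ∀ z : ℝ, (1 / z) * (1 - exp (-z * x)) * exp (-z * y)
      = (1 / z) * (exp (-z * y) - exp (-z * (y + x))) := fun z => by
    rw [mul_add, exp_add]; ring
  simp_rw [hfactor]
  rw [lintegral_Ioi_one_div_mul_exp_sub_exp hy (le_add_of_nonneg_right hx), add_div,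
    div_self hy.ne', add_comm]

section Probability

variable {Ω : Type*} [MeasurableSpace Ω] {μ : Measure Ω}

lemma ProbabilityTheory.IndepFun.lintegral_ofReal_mul {f g : Ω → ℝ} (hfg : IndepFun f g μ)
    (hf : Integrable f μ) (hg : Integrable g μ) (hf0 : 0 ≤ᵐ[μ] f) (hg0 : 0 ≤ᵐ[μ] g) :
    ∫⁻ ω, ENNReal.ofReal (f ω * g ω) ∂μ = ENNReal.ofReal ((∫ ω, f ω ∂μ) * ∫ ω, g ω ∂μ) := by
  rw [← hfg.integral_mul_eq_mul_integral hf.1 hg.1,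
    ofReal_integral_eq_lintegral_ofReal (hfg.integrable_mul hf hg)
      (by filter_upwards [hf0, hg0] with ω h₁ h₂ using mul_nonneg h₁ h₂)]
  rfl

lemma integrable_exp_neg_mul [IsFiniteMeasure μ] {X : Ω → ℝ} (hXm : AEMeasurable X μ)
    (hX : 0 ≤ᵐ[μ] X) {z : ℝ} (hz : 0 ≤ z) : Integrable (fun ω => exp (-z * X ω)) μ :=
  Integrable.of_bound (by fun_prop) 1 <| by
    filter_upwards [hX] with ω hω
    rw [norm_of_nonneg (exp_pos _).le, exp_le_one_iff]
    exact mul_nonpos_of_nonpos_of_nonneg (neg_nonpos.2 hz) hω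

lemma lintegral_one_div_mul_one_sub_exp_mul_exp [IsProbabilityMeasure μ] {X Y : Ω → ℝ}
    (hXm : AEMeasurable X μ) (hYm : AEMeasurable Y μ) (hindep : IndepFun X Y μ)
    (hX : 0 ≤ᵐ[μ] X) (hY : 0 ≤ᵐ[μ] Y) {z : ℝ} (hz : 0 ≤ z) :
    ∫⁻ ω, ENNReal.ofReal ((1 / z) * (1 - exp (-z * X ω)) * exp (-z * Y ω)) ∂μ
      = ENNReal.ofReal ((1 / z) * (1 - ∫ ω, exp (-z * X ω) ∂μ) * ∫ ω, exp (-z * Y ω) ∂μ) := by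
  have hXe := integrable_exp_neg_mul hXm hX hz
  have hYe := integrable_exp_neg_mul hYm hY hz
  have hind : IndepFun (fun ω => (1 / z) * (1 - exp (-z * X ω))) (fun ω => exp (-z * Y ω)) μ :=
    hindep.comp (φ := fun x => (1 / z) * (1 - exp (-z * x))) (ψ := fun y => exp (-z * y))
      (by fun_prop) (by fun_prop)
  rw [hind.lintegral_ofReal_mul (((integrable_const 1).sub hXe).const_mul _) hYe]
  · rw [integral_const_mul, integral_sub (integrable_const 1) hXe, integral_const,
      probReal_univ, one_smul]
  · filter_upwards [hX] with ω hω
    have : exp (-z * X ω) ≤ 1 :=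
      exp_le_one_iff.2 (mul_nonpos_of_nonpos_of_nonneg (neg_nonpos.2 hz) hω)
    exact mul_nonneg (one_div_nonneg.2 hz) (sub_nonneg.2 this)
  · exact ae_of_all _ fun ω => (exp_pos _).le

end Probability

/-- For independent nonnegative random variables `X` and `Y` with `Y > 0`
almost surely, `E[ln(1 + X/Y)] = ∫₀^∞ (1/z)(1 − E[e^{−zX}])E[e^{−zY}] dz`, both sides
interpreted as values in `[0, ∞]`. -/
theorem expected_log_one_add_ratio
    {Ω : Type*} [MeasurableSpace Ω] (μ : Measure Ω) [IsProbabilityMeasure μ]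
    (X Y : Ω → ℝ) (hXm : Measurable X) (hYm : Measurable Y)
    (hindep : IndepFun X Y μ)
    (hX : ∀ᵐ ω ∂μ, 0 ≤ X ω) (hY : ∀ᵐ ω ∂μ, 0 < Y ω) :
    ∫⁻ ω, ENNReal.ofReal (Real.log (1 + X ω / Y ω)) ∂μ
      = ∫⁻ z in Set.Ioi (0 : ℝ),
          ENNReal.ofReal
            ((1 / z) * (1 - ∫ ω, Real.exp (-z * X ω) ∂μ) * (∫ ω, Real.exp (-z * Y ω) ∂μ)) :=
  calc _ = ∫⁻ ω, (∫⁻ z in Ioi (0 : ℝ),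
          ENNReal.ofReal ((1 / z) * (1 - exp (-z * X ω)) * exp (-z * Y ω))) ∂μ :=
        lintegral_congr_ae <| by
          filter_upwards [hX, hY] with ω hx hy using ofReal_log_one_add_div_eq_lintegral hx hy
    _ = ∫⁻ z in Ioi (0 : ℝ), (∫⁻ ω,
          ENNReal.ofReal ((1 / z) * (1 - exp (-z * X ω)) * exp (-z * Y ω)) ∂μ) :=
        lintegral_lintegral_swap (by fun_prop)
    _ = _ := setLIntegral_congr_fun measurableSet_Ioi fun _ hz =>
        lintegral_one_div_mul_one_sub_exp_mul_exp hXm.aemeasurable hYm.aemeasurable hindep hX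
          (hY.mono fun _ h => h.le) (le_of_lt hz)
end

section
/- Let m and K be positive integers, c > 0 a real constant, I a nonempty finite index set, and ℓ_i > 0 real numbers for i ∈ I. Let X and (g_i)_{i∈I} be mutually independent random variables, where X has the Gamma distribution with shape m and rate 1, and each g_i has the Gamma distribution with shape K and rate 1. Then E[ln(1 + cX / Σ_{i∈I} ℓ_i g_i)] = ∫₀^∞ (1/z) · (1 − (1 + cz)^{−m}) · Π_{i∈I} (1 + ℓ_i z)^{−K} dz. -/
/-!
For `x ≥ 0` and `y > 0`, Frullani's integral gives
`log (1 + x / y) = ∫₀^∞ (e^{-z y} - e^{-z (x + y)}) / z dz`.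
Substituting `x = c X`, `y = Σ ℓᵢ gᵢ` and exchanging expectation and `dz` integral (Tonelli:
the integrand is nonnegative) turns the expectations of exponentials into moment generating
functions; independence factors them, and the Laplace transform of `Gamma(a, 1)` at `s` is
`(1 + s)^{-a}`.
-/

open MeasureTheory ProbabilityTheory Real Set

section Gamma

variable {Ω : Type*} [MeasurableSpace Ω] {μ : Measure Ω} {Y : Ω → ℝ} {a r : ℝ}

lemma gammaPDF_mul_ofReal_exp (hr : 0 ≤ r) {t : ℝ} (ht : t < r) (x : ℝ) :
    gammaPDF a r x * ENNReal.ofReal (exp (t * x))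
      = ENNReal.ofReal ((r / (r - t)) ^ a) * gammaPDF a (r - t) x := by
  have hrt : 0 < r - t := sub_pos.2 ht
  rcases lt_or_ge x 0 with hx | hx
  · simp [gammaPDF_of_neg hx]
  rw [gammaPDF_of_nonneg hx, gammaPDF_of_nonneg hx, ← ENNReal.ofReal_mul' (exp_pos _).le,
    ← ENNReal.ofReal_mul (rpow_nonneg (div_nonneg hr hrt.le) a), div_rpow hr hrt.le]
  congr 1
  have : (r - t) ^ a ≠ 0 := (rpow_pos_of_pos hrt a).ne'
  rw [mul_assoc, mul_assoc, ← exp_add]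
  field_simp
  ring_nf

lemma mgf_id_gammaMeasure (ha : 0 < a) (hr : 0 < r) {t : ℝ} (ht : t < r) :
    mgf id (gammaMeasure a r) t = (r / (r - t)) ^ a := by
  have hexp : Measurable fun x : ℝ => exp (t * x) := by fun_prop
  have hpdf : ∀ r, Measurable (gammaPDF a r) := fun r =>
    (measurable_gammaPDFReal a r).ennreal_ofReal
  change ∫ x, exp (t * x) ∂gammaMeasure a r = _
  rw [integral_eq_lintegral_of_nonneg_ae (ae_of_all _ fun x => (exp_pos _).le)
      hexp.aestronglyMeasurable, gammaMeasure, lintegral_withDensity_eq_lintegral_mul _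
      (hpdf r) hexp.ennreal_ofReal]
  simp_rw [Pi.mul_apply, gammaPDF_mul_ofReal_exp hr.le ht]
  rw [lintegral_const_mul _ (hpdf _),
    lintegral_gammaPDF_eq_one ha (sub_pos.2 ht), mul_one,
    ENNReal.toReal_ofReal (rpow_nonneg (div_nonneg hr.le (sub_pos.2 ht).le) a)]

lemma mgf_const_mul_neg_of_map_eq_gammaMeasure_one (hY : AEMeasurable Y μ)
    (hmap : μ.map Y = gammaMeasure a 1) (ha : 0 < a) {c s : ℝ} (hcs : -1 < c * s) :
    mgf (fun ω => c * Y ω) μ (-s) = (1 + c * s) ^ (-a) := by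
  rw [mgf_const_mul, mul_neg, ← mgf_id_map hY, hmap, mgf_id_gammaMeasure ha one_pos (by linarith),
    sub_neg_eq_add, one_div, inv_rpow (by linarith), rpow_neg (by linarith)]

lemma gammaMeasure_Iic_zero : gammaMeasure a r (Iic 0) = 0 := by
  rw [gammaMeasure, withDensity_apply _ measurableSet_Iic,
    lintegral_Iic_eq_lintegral_Iio_add_Icc _ le_rfl, lintegral_gammaPDF_of_nonpos le_rfl,
    Icc_self, zero_add]
  exact setLIntegral_measure_zero _ _ (by simp)

lemma ae_pos_of_map_eq_gammaMeasure (hY : AEMeasurable Y μ) (hmap : μ.map Y = gammaMeasure a r) :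
    ∀ᵐ ω ∂μ, 0 < Y ω := by
  refine ae_of_ae_map hY ?_
  rw [hmap, ae_iff]
  simp only [not_lt]
  exact gammaMeasure_Iic_zero

end Gamma

section Frullani

lemma integral_exp_neg_mul_Ioc {z : ℝ} (hz : 0 < z) {a b : ℝ} (hab : a ≤ b) :
    ∫ t in Ioc a b, exp (-z * t) = z⁻¹ * (exp (-z * a) - exp (-z * b)) := by
  rw [← intervalIntegral.integral_of_le hab,
    intervalIntegral.integral_comp_mul_left (fun u => exp u) (neg_ne_zero.2 hz.ne'),
    integral_exp, smul_eq_mul, inv_neg]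
  ring

lemma lintegral_exp_neg_mul_Ioi {t : ℝ} (ht : 0 < t) :
    ∫⁻ z in Ioi 0, ENNReal.ofReal (exp (-z * t)) = ENNReal.ofReal t⁻¹ := by
  simp_rw [neg_mul, mul_comm _ t, ← neg_mul]
  rw [← ofReal_integral_eq_lintegral_ofReal (exp_neg_integrableOn_Ioi 0 ht)
    (ae_of_all _ fun z => (exp_pos _).le), integral_exp_mul_Ioi (neg_lt_zero.2 ht), mul_zero,
    exp_zero, neg_div, div_neg, neg_neg, one_div]

lemma lintegral_inv_Ioc {a b : ℝ} (ha : 0 < a) (hab : a ≤ b) :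
    ∫⁻ t in Ioc a b, ENNReal.ofReal t⁻¹ = ENNReal.ofReal (log (b / a)) := by
  have hpos : ∀ t ∈ Icc a b, 0 < t := fun t ht => ha.trans_le ht.1
  have hint : IntegrableOn (fun t : ℝ => t⁻¹) (Ioc a b) :=
    (ContinuousOn.inv₀ continuousOn_id fun t ht => (hpos t ht).ne').integrableOn_Icc
      |>.mono_set Ioc_subset_Icc_self
  rw [← ofReal_integral_eq_lintegral_ofReal hint
      ((ae_restrict_iff' measurableSet_Ioc).2 (ae_of_all _ fun t ht =>
        (inv_pos.2 (hpos t (Ioc_subset_Icc_self ht))).le)),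
    ← intervalIntegral.integral_of_le hab,
    integral_inv (by rw [uIcc_of_le hab]; exact fun h => (hpos 0 h).false)]

lemma lintegral_frullani_exp {a b : ℝ} (ha : 0 < a) (hab : a ≤ b) :
    ∫⁻ z in Ioi 0, ENNReal.ofReal (z⁻¹ * (exp (-z * a) - exp (-z * b)))
      = ENNReal.ofReal (log (b / a)) :=
  calc ∫⁻ z in Ioi 0, ENNReal.ofReal (z⁻¹ * (exp (-z * a) - exp (-z * b)))
      = ∫⁻ z in Ioi 0, ∫⁻ t in Ioc a b, ENNReal.ofReal (exp (-z * t)) := by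
        refine setLIntegral_congr_fun measurableSet_Ioi fun z hz => ?_
        rw [← integral_exp_neg_mul_Ioc hz hab, ofReal_integral_eq_lintegral_ofReal
          (Continuous.integrableOn_Ioc (by fun_prop)) (ae_of_all _ fun t => (exp_pos _).le)]
    _ = ∫⁻ t in Ioc a b, ∫⁻ z in Ioi 0, ENNReal.ofReal (exp (-z * t)) :=
        lintegral_lintegral_swap (by fun_prop)
    _ = ∫⁻ t in Ioc a b, ENNReal.ofReal t⁻¹ :=
        setLIntegral_congr_fun measurableSet_Ioc fun t ht =>
          lintegral_exp_neg_mul_Ioi (ha.trans ht.1)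
    _ = ENNReal.ofReal (log (b / a)) := lintegral_inv_Ioc ha hab

end Frullani

section LogRatio

variable {Ω : Type*} [MeasurableSpace Ω] {μ : Measure Ω} {X Y : Ω → ℝ}

lemma stronglyMeasurable_mgf [SFinite μ] (hX : Measurable X) : StronglyMeasurable (mgf X μ) :=
  (show StronglyMeasurable fun p : ℝ × Ω => exp (p.1 * X p.2) from
    (by fun_prop : Measurable _).stronglyMeasurable).integral_prod_right'

lemma integrable_exp_mul_of_nonpos [IsFiniteMeasure μ] (hX : Measurable X) (hX0 : 0 ≤ᵐ[μ] X)
    {t : ℝ} (ht : t ≤ 0) : Integrable (fun ω => exp (t * X ω)) μ := by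
  refine .of_bound (by fun_prop) 1 ?_
  filter_upwards [hX0] with ω hω
  rw [norm_of_nonneg (exp_pos _).le, exp_le_one_iff]
  exact mul_nonpos_of_nonpos_of_nonneg ht hω

lemma exp_mul_add_le_exp_mul {t x y : ℝ} (ht : t ≤ 0) (hx : 0 ≤ x) :
    exp (t * (x + y)) ≤ exp (t * y) :=
  exp_le_exp.2 (by nlinarith)

lemma mgf_add_le_of_nonpos [IsFiniteMeasure μ] (hX : Measurable X) (hY : Measurable Y)
    (hX0 : 0 ≤ᵐ[μ] X) (hY0 : 0 ≤ᵐ[μ] Y) {t : ℝ} (ht : t ≤ 0) :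
    mgf (X + Y) μ t ≤ mgf Y μ t := by
  have hXY0 : 0 ≤ᵐ[μ] X + Y := by
    filter_upwards [hX0, hY0] with ω hXω hYω using add_nonneg hXω hYω
  refine integral_mono_ae (integrable_exp_mul_of_nonpos (hX.add hY) hXY0 ht)
    (integrable_exp_mul_of_nonpos hY hY0 ht) ?_
  filter_upwards [hX0] with ω hXω using exp_mul_add_le_exp_mul ht hXω

lemma lintegral_ofReal_inv_mul_exp_sub_exp [IsFiniteMeasure μ] (hX : Measurable X)
    (hY : Measurable Y) (hX0 : 0 ≤ᵐ[μ] X) (hY0 : 0 ≤ᵐ[μ] Y) {z : ℝ} (hz : 0 < z) :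
    ∫⁻ ω, ENNReal.ofReal (z⁻¹ * (exp (-z * Y ω) - exp (-z * (X + Y) ω))) ∂μ
      = ENNReal.ofReal (z⁻¹ * (mgf Y μ (-z) - mgf (X + Y) μ (-z))) := by
  have hint_Y := integrable_exp_mul_of_nonpos hY hY0 (neg_nonpos.2 hz.le)
  have hXY0 : 0 ≤ᵐ[μ] X + Y := by
    filter_upwards [hX0, hY0] with ω hXω hYω using add_nonneg hXω hYω
  have hint_XY := integrable_exp_mul_of_nonpos (hX.add hY) hXY0 (neg_nonpos.2 hz.le)
  have hint : Integrable (fun ω => z⁻¹ * (exp (-z * Y ω) - exp (-z * (X + Y) ω))) μ :=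
    (hint_Y.sub hint_XY).const_mul z⁻¹
  rw [← ofReal_integral_eq_lintegral_ofReal hint, integral_const_mul,
    integral_sub hint_Y hint_XY, mgf, mgf]
  filter_upwards [hX0] with ω hXω
  exact mul_nonneg (inv_nonneg.2 hz.le)
    (sub_nonneg.2 (exp_mul_add_le_exp_mul (neg_nonpos.2 hz.le) hXω))

lemma lintegral_ofReal_log_one_add_div [SFinite μ] (hX : Measurable X) (hY : Measurable Y)
    (hX0 : 0 ≤ᵐ[μ] X) (hY0 : ∀ᵐ ω ∂μ, 0 < Y ω) :
    ∫⁻ ω, ENNReal.ofReal (log (1 + X ω / Y ω)) ∂μ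
      = ∫⁻ z in Ioi 0,
          (∫⁻ ω, ENNReal.ofReal (z⁻¹ * (exp (-z * Y ω) - exp (-z * (X + Y) ω))) ∂μ) :=
  calc ∫⁻ ω, ENNReal.ofReal (log (1 + X ω / Y ω)) ∂μ
      = ∫⁻ ω, (∫⁻ z in Ioi 0,
          ENNReal.ofReal (z⁻¹ * (exp (-z * Y ω) - exp (-z * (X + Y) ω)))) ∂μ := by
        refine lintegral_congr_ae ?_
        filter_upwards [hX0, hY0] with ω hXω hYω
        rw [Pi.add_apply, lintegral_frullani_exp hYω (le_add_of_nonneg_left hXω), add_div,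
          div_self hYω.ne', add_comm]
    _ = _ := lintegral_lintegral_swap (by fun_prop)

theorem integral_log_one_add_div_eq_integral_mgf [IsProbabilityMeasure μ]
    (hXY : IndepFun X Y μ) (hX : Measurable X) (hY : Measurable Y) (hX0 : 0 ≤ᵐ[μ] X)
    (hY0 : ∀ᵐ ω ∂μ, 0 < Y ω) :
    ∫ ω, log (1 + X ω / Y ω) ∂μ
      = ∫ z in Ioi 0, 1 / z * (1 - mgf X μ (-z)) * mgf Y μ (-z) := by
  have hY0' : 0 ≤ᵐ[μ] Y := hY0.mono fun ω hω => hω.le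
  set G : ℝ → ℝ := fun z => z⁻¹ * (mgf Y μ (-z) - mgf (X + Y) μ (-z))
  have hG : ∀ z ∈ Ioi (0 : ℝ), 1 / z * (1 - mgf X μ (-z)) * mgf Y μ (-z) = G z := by
    intro z _
    simp only [G, hXY.mgf_add' hX.aestronglyMeasurable hY.aestronglyMeasurable]
    ring
  have hG0 : ∀ z ∈ Ioi (0 : ℝ), 0 ≤ G z := fun z (hz : 0 < z) =>
    mul_nonneg (inv_nonneg.2 hz.le)
      (sub_nonneg.2 (mgf_add_le_of_nonpos hX hY hX0 hY0' (neg_nonpos.2 hz.le)))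
  have hGm : Measurable G := by
    have := (stronglyMeasurable_mgf (μ := μ) hY).measurable
    have := (stronglyMeasurable_mgf (μ := μ) (hX.add hY)).measurable
    fun_prop
  have hlog0 : 0 ≤ᵐ[μ] fun ω => log (1 + X ω / Y ω) := by
    filter_upwards [hX0, hY0] with ω hXω hYω
    exact log_nonneg (le_add_of_nonneg_right (div_nonneg hXω hYω.le))
  rw [setIntegral_congr_fun measurableSet_Ioi hG,
    integral_eq_lintegral_of_nonneg_ae hlog0
      (by fun_prop : Measurable fun ω => log (1 + X ω / Y ω)).aestronglyMeasurable,
    integral_eq_lintegral_of_nonneg_ae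
      ((ae_restrict_iff' measurableSet_Ioi).2 (ae_of_all _ hG0)) hGm.aestronglyMeasurable,
    lintegral_ofReal_log_one_add_div hX hY hX0 hY0]
  exact congrArg ENNReal.toReal (setLIntegral_congr_fun measurableSet_Ioi fun z hz =>
    lintegral_ofReal_inv_mul_exp_sub_exp hX hY hX0 hY0' hz)

end LogRatio

lemma ProbabilityTheory.iIndepFun.indepFun_sum_of_option_elim {Ω ι : Type*} [MeasurableSpace Ω]
    {μ : Measure Ω} [Fintype ι] {X : Ω → ℝ} {Y : ι → Ω → ℝ}
    (h : iIndepFun (fun o : Option ι => o.elim X Y) μ) (hX : Measurable X)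
    (hY : ∀ i, Measurable (Y i)) :
    IndepFun X (∑ i, Y i) μ := by
  have hmeas : ∀ o : Option ι, Measurable (o.elim X Y) := by rintro (_ | i) <;> simp [hX, hY]
  simpa [Finset.sum_map] using
    (h.indepFun_finsetSum_of_notMem hmeas (s := Finset.univ.map .some) (i := none) (by simp)).symm

lemma ProbabilityTheory.iIndepFun.option_elim_const_mul {Ω ι : Type*} [MeasurableSpace Ω]
    {μ : Measure Ω} {X : Ω → ℝ} {Y : ι → Ω → ℝ}
    (h : iIndepFun (fun o : Option ι => o.elim X Y) μ) (c : ℝ) (ℓ : ι → ℝ) :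
    iIndepFun (fun o : Option ι => o.elim (fun ω => c * X ω) fun i ω => ℓ i * Y i ω) μ := by
  convert h.comp (fun o => o.elim (c * ·) (ℓ · * ·))
    (by rintro (_ | i) <;> exact measurable_id.const_mul _) using 2 with o
  cases o <;> rfl

/-- Conditional ergodic rate formula: if `X ~ Gamma(m, 1)` and the `g i` are
i.i.d.-independent `Gamma(K, 1)` fading gains (all mutually independent), `c > 0` and the
pathloss coefficients `ℓ i > 0`, then
`E[ln(1 + cX / Σᵢ ℓᵢ gᵢ)] = ∫₀^∞ (1/z)(1 − (1+cz)^{−m}) Πᵢ (1 + ℓᵢ z)^{−K} dz`. -/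
theorem expected_log_SIR_gamma
    {Ω ι : Type*} [MeasurableSpace Ω] [Fintype ι] [Nonempty ι]
    (μ : Measure Ω) [IsProbabilityMeasure μ]
    (m K : ℕ) (hm : 0 < m) (hK : 0 < K) (c : ℝ) (hc : 0 < c)
    (ℓ : ι → ℝ) (hℓ : ∀ i, 0 < ℓ i)
    (X : Ω → ℝ) (g : ι → Ω → ℝ)
    (hXm : Measurable X) (hgm : ∀ i, Measurable (g i))
    (hindep : iIndepFun (fun o : Option ι => o.elim X g) μ)
    (hX : Measure.map X μ = gammaMeasure m 1)
    (hg : ∀ i, Measure.map (g i) μ = gammaMeasure K 1) :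
    ∫ ω, Real.log (1 + c * X ω / ∑ i, ℓ i * g i ω) ∂μ
      = ∫ z in Set.Ioi (0 : ℝ),
          (1 / z) * (1 - (1 + c * z) ^ (-(m : ℝ))) * ∏ i, (1 + ℓ i * z) ^ (-(K : ℝ)) := by
  have hindep_scaled := hindep.option_elim_const_mul c ℓ
  have hindep_g : iIndepFun (fun i ω => ℓ i * g i ω) μ :=
    hindep_scaled.precomp (Option.some_injective ι)
  have hmeas_g : ∀ i, Measurable fun ω => ℓ i * g i ω := fun i => (hgm i).const_mul (ℓ i)
  have hsum : ∑ i, (fun ω => ℓ i * g i ω) = fun ω => ∑ i, ℓ i * g i ω :=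
    Finset.sum_fn _ _
  have hcX0 : 0 ≤ᵐ[μ] fun ω => c * X ω :=
    (ae_pos_of_map_eq_gammaMeasure hXm.aemeasurable hX).mono fun ω h => (mul_pos hc h).le
  have hSpos : ∀ᵐ ω ∂μ, 0 < ∑ i, ℓ i * g i ω := by
    have hgpos i := ae_pos_of_map_eq_gammaMeasure (hgm i).aemeasurable (hg i)
    filter_upwards [ae_all_iff.2 hgpos] with ω hgω
    exact Finset.sum_pos (fun i _ => mul_pos (hℓ i) (hgω i)) Finset.univ_nonempty
  rw [integral_log_one_add_div_eq_integral_mgf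
      (hsum ▸ hindep_scaled.indepFun_sum_of_option_elim (hXm.const_mul c) hmeas_g)
      (hXm.const_mul c) (by fun_prop) hcX0 hSpos, ← hsum]
  refine setIntegral_congr_fun measurableSet_Ioi fun z (hz : 0 < z) => ?_
  rw [hindep_g.mgf_sum hmeas_g, mgf_const_mul_neg_of_map_eq_gammaMeasure_one hXm.aemeasurable hX
    (by exact_mod_cast hm) (neg_one_lt_zero.trans (mul_pos hc hz))]
  congr 1
  exact Finset.prod_congr rfl fun i _ => mgf_const_mul_neg_of_map_eq_gammaMeasure_one
    (hgm i).aemeasurable (hg i) (by exact_mod_cast hK) (neg_one_lt_zero.trans (mul_pos (hℓ i) hz))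
end

section
/- Let α > 2 and z > 0, r > 0 be real numbers. Then 2 ∫_r^∞ (1 − e^{−z r^α u^{−α}}) u du = r² (F(z,α) − 1), where F(z,α) = e^{−z} + z^{2/α} ∫₀^z t^{−2/α} e^{−t} dt. -/
/-!
Rather than substituting `t = z (r/u)^α` and integrating by parts, write down an antiderivative
in `u` directly: with `s = c u^{-α}` and `γ(a, x) = ∫₀^x t^{a-1} e^{-t} dt`,
`G(u) = u²/2 (1 - e^{-s}) - c^{2/α}/2 γ(1 - 2/α, s)` has `G'(u) = (1 - e^{-s}) u`, the two
`e^{-s} s'` terms cancelling because `c^{2/α} s^{-2/α} = u²`. Since `0 ≤ 1 - e^{-s} ≤ s` and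
`u² s = c u^{2-α}`, `G` tends to `0` at infinity when `α > 2`, so the integral over `(r, ∞)` is
`-G(r)`; for `c = z r^α` one has `s(r) = z` and `c^{2/α} = z^{2/α} r²`.
-/

open MeasureTheory

/-- The paper's function `F(z,α) = e^{−z} + z^{2/α} ∫₀^z t^{−2/α} e^{−t} dt`
(lower incomplete gamma convention). -/
noncomputable def paperF (z α : ℝ) : ℝ :=
  Real.exp (-z) + z ^ (2 / α) * ∫ t in Set.Ioo (0 : ℝ) z, t ^ (-(2 / α)) * Real.exp (-t)

open Real Set Filter Topology intervalIntegral

noncomputable def lowerGamma (s x : ℝ) : ℝ :=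
  ∫ t in 0..x, t ^ (s - 1) * exp (-t)

section LowerGamma

variable {s : ℝ}

theorem intervalIntegrable_rpow_sub_one_mul_exp_neg (hs : 0 < s) (a b : ℝ) :
    IntervalIntegrable (fun t => t ^ (s - 1) * exp (-t)) volume a b :=
  (intervalIntegrable_rpow' (by linarith)).mul_continuousOn (by fun_prop)

theorem continuous_lowerGamma (hs : 0 < s) : Continuous (lowerGamma s) :=
  continuous_primitive (intervalIntegrable_rpow_sub_one_mul_exp_neg hs) 0

theorem lowerGamma_zero : lowerGamma s 0 = 0 := integral_same

theorem hasDerivAt_lowerGamma (hs : 0 < s) {x : ℝ} (hx : x ≠ 0) :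
    HasDerivAt (lowerGamma s) (x ^ (s - 1) * exp (-x)) x := by
  have hcont : ∀ y ≠ (0 : ℝ), ContinuousAt (fun t => t ^ (s - 1) * exp (-t)) y := fun y hy =>
    (continuousAt_id.rpow_const (Or.inl hy)).mul (by fun_prop)
  exact integral_hasDerivAt_right (intervalIntegrable_rpow_sub_one_mul_exp_neg hs 0 x)
    (ContinuousAt.stronglyMeasurableAtFilter isOpen_ne hcont x hx) (hcont x hx)

theorem lowerGamma_eq_setIntegral_Ioo {x : ℝ} (hx : 0 ≤ x) :
    lowerGamma s x = ∫ t in Ioo 0 x, t ^ (s - 1) * exp (-t) := by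
  rw [lowerGamma, integral_of_le hx, integral_Ioc_eq_integral_Ioo]

end LowerGamma

theorem one_sub_exp_neg_nonneg {x : ℝ} (hx : 0 ≤ x) : 0 ≤ 1 - exp (-x) :=
  sub_nonneg.2 (exp_le_one_iff.2 (neg_nonpos.2 hx))

theorem one_sub_two_div_pos {α : ℝ} (hα : 2 < α) : 0 < 1 - 2 / α := by
  rw [sub_pos, div_lt_one (by linarith)]
  exact hα

theorem rpow_two_div_mul_rpow_neg_two_div {α c u : ℝ} (hα : α ≠ 0) (hc : 0 < c) (hu : 0 < u) :
    c ^ (2 / α) * (c * u ^ (-α)) ^ (1 - 2 / α - 1) = u ^ 2 := by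
  rw [mul_rpow hc.le (by positivity), ← rpow_mul hu.le, ← mul_assoc, ← rpow_add hc,
    show -α * (1 - 2 / α - 1) = 2 by field_simp; ring]
  norm_num

noncomputable def interferencePrimitive (α c u : ℝ) : ℝ :=
  u ^ 2 / 2 * (1 - exp (-(c * u ^ (-α))))
    - c ^ (2 / α) / 2 * lowerGamma (1 - 2 / α) (c * u ^ (-α))

section InterferencePrimitive

variable {α c : ℝ}

theorem hasDerivAt_interferencePrimitive (hα : 2 < α) (hc : 0 < c) {u : ℝ} (hu : 0 < u) :
    HasDerivAt (interferencePrimitive α c) ((1 - exp (-(c * u ^ (-α)))) * u) u := by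
  have hs : HasDerivAt (fun u => c * u ^ (-α)) (c * (-α * u ^ (-α - 1))) u :=
    (hasDerivAt_rpow_const (Or.inl hu.ne')).const_mul c
  have hγ := (hasDerivAt_lowerGamma (one_sub_two_div_pos hα) (by positivity)).comp u hs
  refine ((((hasDerivAt_pow 2 u).div_const 2).mul (hs.neg.exp.const_sub 1)).sub
    (hγ.const_mul (c ^ (2 / α) / 2))).congr_deriv ?_
  have key := rpow_two_div_mul_rpow_neg_two_div (α := α) (by linarith) hc hu
  simp only [Pi.neg_apply]
  linear_combination (-exp (-(c * u ^ (-α))) * (c * (-α * u ^ (-α - 1))) / 2) * key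

theorem tendsto_interferencePrimitive_atTop (hα : 2 < α) (hc : 0 ≤ c) :
    Tendsto (interferencePrimitive α c) atTop (𝓝 0) := by
  unfold interferencePrimitive
  have hs : Tendsto (fun u : ℝ => c * u ^ (-α)) atTop (𝓝 0) := by
    simpa using (tendsto_rpow_neg_atTop (by linarith)).const_mul c
  have hγ : Tendsto (fun u => lowerGamma (1 - 2 / α) (c * u ^ (-α))) atTop (𝓝 0) :=
    ((continuous_lowerGamma (one_sub_two_div_pos hα)).tendsto' 0 0 lowerGamma_zero).comp hs
  have hbound : Tendsto (fun u : ℝ => c / 2 * u ^ (-(α - 2))) atTop (𝓝 0) := by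
    simpa using (tendsto_rpow_neg_atTop (by linarith : 0 < α - 2)).const_mul (c / 2)
  have hsq : Tendsto (fun u : ℝ => u ^ 2 / 2 * (1 - exp (-(c * u ^ (-α))))) atTop (𝓝 0) := by
    refine squeeze_zero' ?_ ?_ hbound
    · filter_upwards [eventually_gt_atTop 0] with u hu
      exact mul_nonneg (by positivity) (one_sub_exp_neg_nonneg (by positivity))
    · filter_upwards [eventually_gt_atTop 0] with u hu
      calc u ^ 2 / 2 * (1 - exp (-(c * u ^ (-α))))
          ≤ u ^ 2 / 2 * (c * u ^ (-α)) := by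
            gcongr
            linarith [add_one_le_exp (-(c * u ^ (-α)))]
        _ = c / 2 * u ^ (-(α - 2)) := by
            rw [neg_sub, sub_eq_add_neg, rpow_add hu, rpow_two]
            ring
  simpa using hsq.sub (hγ.const_mul (c ^ (2 / α) / 2))

theorem integral_Ioi_one_sub_exp_neg_mul_rpow_neg_mul (hα : 2 < α) (hc : 0 < c) {a : ℝ}
    (ha : 0 < a) :
    ∫ u in Ioi a, (1 - exp (-(c * u ^ (-α)))) * u
      = (c ^ (2 / α) * lowerGamma (1 - 2 / α) (c * a ^ (-α))
          - a ^ 2 * (1 - exp (-(c * a ^ (-α))))) / 2 := by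
  have hderiv : ∀ u ∈ Ioi a,
      HasDerivAt (interferencePrimitive α c) ((1 - exp (-(c * u ^ (-α)))) * u) u :=
    fun u hu => hasDerivAt_interferencePrimitive hα hc (ha.trans hu)
  rw [integral_Ioi_of_hasDerivAt_of_nonneg
    (hasDerivAt_interferencePrimitive hα hc ha).continuousAt.continuousWithinAt hderiv
    (fun u hu => ?_) (tendsto_interferencePrimitive_atTop hα hc.le), interferencePrimitive]
  · ring
  · have hu : 0 < u := ha.trans hu
    exact mul_nonneg (one_sub_exp_neg_nonneg (by positivity)) hu.le

end InterferencePrimitive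

/-- Out-of-cell interference Laplace transform computation:
for `α > 2`, `z > 0`, `r > 0`,
`2∫_r^∞ (1 − e^{−z r^α u^{−α}}) u du = r²(F(z,α) − 1)`. -/
theorem interference_laplace_eq_F
    (α z r : ℝ) (hα : 2 < α) (hz : 0 < z) (hr : 0 < r) :
    2 * ∫ u in Set.Ioi r, (1 - Real.exp (-(z * r ^ α * u ^ (-α)))) * u
      = r ^ 2 * (paperF z α - 1) := by
  have hzr : z * r ^ α * r ^ (-α) = z := by
    rw [mul_assoc, ← rpow_add hr, add_neg_cancel, rpow_zero, mul_one]
  have hpow : (z * r ^ α) ^ (2 / α) = z ^ (2 / α) * r ^ 2 := by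
    rw [mul_rpow hz.le (by positivity), ← rpow_mul hr.le, mul_div_cancel₀ _ (by linarith),
      rpow_two]
  have hγ : lowerGamma (1 - 2 / α) z = ∫ t in Ioo 0 z, t ^ (-(2 / α)) * exp (-t) := by
    rw [lowerGamma_eq_setIntegral_Ioo hz.le, sub_sub_cancel_left]
  rw [integral_Ioi_one_sub_exp_neg_mul_rpow_neg_mul hα (mul_pos hz (rpow_pos_of_pos hr α)) hr,
    hzr, hpow, paperF, ← hγ]
  ring
end

section
/- For every real α > 2, the function φ(a) := ∫₀^∞ (1 − e^{−za}) / (z F(z,α)) dz is strictly increasing and strictly concave on [0, ∞). -/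
open MeasureTheory

/-!
Both properties hold pointwise: for each `z > 0` the map `a ↦ (1 - e^{-za}) / (z F(z,α))` is
strictly increasing and strictly concave, and integrating against a nonzero measure preserves
strict inequalities between integrable functions. The only analytic input is integrability for
`a ≥ 0`: near `0` the integrand is at most `a e`, since `F(z,α) ≥ e^{-z}`; at infinity it is
`O(z^{-1-2/α})`, since `F(z,α) ≥ K z^{2/α}` with `K = ∫₀^1 t^{-2/α} e^{-t} dt > 0`.
-/

open Set Real Filter

section StrictIntegral

variable {X : Type*} [MeasurableSpace X] {μ : Measure X} [NeZero μ]

lemma integral_pos_of_ae_pos {f : X → ℝ} (hf : Integrable f μ) (h : ∀ᵐ x ∂μ, 0 < f x) :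
    0 < ∫ x, f x ∂μ := by
  have h_nonneg : 0 ≤ᵐ[μ] f := h.mono fun _ hx => hx.le
  refine (integral_nonneg_of_ae h_nonneg).lt_of_ne fun h_zero => ?_
  obtain ⟨x, hx_pos, hx_zero⟩ :=
    (h.and ((integral_eq_zero_iff_of_nonneg_ae h_nonneg hf).1 h_zero.symm)).exists
  exact hx_pos.ne' hx_zero

lemma integral_lt_integral_of_ae_lt {f g : X → ℝ} (hf : Integrable f μ) (hg : Integrable g μ)
    (h : ∀ᵐ x ∂μ, f x < g x) : ∫ x, f x ∂μ < ∫ x, g x ∂μ := by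
  rw [← sub_pos, ← integral_sub hg hf]
  exact integral_pos_of_ae_pos (hg.sub hf) (h.mono fun _ hx => sub_pos.2 hx)

lemma strictMonoOn_integral {β : Type*} [Preorder β] {s : Set β} {g : β → X → ℝ}
    (hg : ∀ a ∈ s, Integrable (g a) μ) (h : ∀ᵐ x ∂μ, StrictMonoOn (fun a => g a x) s) :
    StrictMonoOn (fun a => ∫ x, g a x ∂μ) s := fun a ha b hb hab =>
  integral_lt_integral_of_ae_lt (hg a ha) (hg b hb) (h.mono fun _ hx => hx ha hb hab)

lemma strictConcaveOn_integral {E : Type*} [AddCommMonoid E] [Module ℝ E] {s : Set E}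
    {g : E → X → ℝ} (hg : ∀ a ∈ s, Integrable (g a) μ)
    (h : ∀ᵐ x ∂μ, StrictConcaveOn ℝ s (fun a => g a x)) :
    StrictConcaveOn ℝ s (fun a => ∫ x, g a x ∂μ) := by
  have hs : Convex ℝ s := h.exists.choose_spec.1
  refine ⟨hs, fun a ha b hb hab t u ht hu htu => ?_⟩
  calc t • ∫ x, g a x ∂μ + u • ∫ x, g b x ∂μ = ∫ x, (t • g a x + u • g b x) ∂μ := by
        rw [← integral_smul, ← integral_smul]
        exact (integral_add ((hg a ha).smul t) ((hg b hb).smul u)).symm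
    _ < ∫ x, g (t • a + u • b) x ∂μ :=
        integral_lt_integral_of_ae_lt (((hg a ha).smul t).add ((hg b hb).smul u))
          (hg _ (hs ha hb ht.le hu.le htu)) (h.mono fun _ hx => hx.2 ha hb hab ht hu htu)

end StrictIntegral

section OneSubExp

variable {c d : ℝ}

lemma strictMono_one_sub_exp_neg_mul_div (hc : 0 < c) (hd : 0 < d) :
    StrictMono fun a => (1 - exp (-(c * a))) / d := fun a b hab => by
  have : exp (-(c * b)) < exp (-(c * a)) := exp_lt_exp.2 (by nlinarith)
  exact div_lt_div_of_pos_right (by linarith) hd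

lemma strictConcaveOn_one_sub_exp_neg_mul_div (hc : 0 < c) (hd : 0 < d) :
    StrictConcaveOn ℝ univ fun a => (1 - exp (-(c * a))) / d := by
  refine ⟨convex_univ, fun a _ b _ hab t u ht hu htu => ?_⟩
  have hne : -(c * a) ≠ -(c * b) := fun h => hab (mul_left_cancel₀ hc.ne' (neg_injective h))
  have hconv := strictConvexOn_exp.2 (mem_univ _) (mem_univ _) hne ht hu htu
  simp only [smul_eq_mul] at hconv ⊢
  have hlin : t * -(c * a) + u * -(c * b) = -(c * (t * a + u * b)) := by ring
  rw [hlin] at hconv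
  calc t * ((1 - exp (-(c * a))) / d) + u * ((1 - exp (-(c * b))) / d)
      = (1 - (t * exp (-(c * a)) + u * exp (-(c * b)))) / d := by
        obtain rfl : u = 1 - t := by linarith
        ring
    _ < (1 - exp (-(c * (t * a + u * b)))) / d := div_lt_div_of_pos_right (by linarith) hd

end OneSubExp

section PaperF

variable {α : ℝ}

lemma integrableOn_rpow_mul_exp_neg {r : ℝ} (hr : -1 < r) :
    IntegrableOn (fun t => t ^ r * exp (-t)) (Ioi 0) := by
  have h := GammaIntegral_convergent (s := r + 1) (by linarith)
  simp only [add_sub_cancel_right] at h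
  exact h.congr_fun (fun t _ => mul_comm _ _) measurableSet_Ioi

lemma integrableOn_paperF_integrand (hα : 2 < α) :
    IntegrableOn (fun t => t ^ (-(2 / α)) * exp (-t)) (Ioi 0) :=
  integrableOn_rpow_mul_exp_neg (by rw [neg_lt_neg_iff, div_lt_one (by linarith)]; exact hα)

lemma monotone_paperF_integral (hα : 2 < α) :
    Monotone fun z => ∫ t in Ioo 0 z, t ^ (-(2 / α)) * exp (-t) := fun _ _ hxy =>
  setIntegral_mono_set ((integrableOn_paperF_integrand hα).mono_set Ioo_subset_Ioi_self)
    ((ae_restrict_iff' measurableSet_Ioo).2 (Eventually.of_forall fun _ ht =>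
      mul_nonneg (rpow_nonneg ht.1.le _) (exp_pos _).le))
    (Eventually.of_forall (Ioo_subset_Ioo le_rfl hxy))

lemma measurable_paperF (hα : 2 < α) : Measurable fun z => paperF z α :=
  (continuous_exp.comp continuous_neg).measurable.add
    ((continuous_rpow_const (by positivity)).measurable.mul
      (monotone_paperF_integral hα).measurable)

lemma exp_neg_le_paperF {z : ℝ} (hz : 0 < z) : exp (-z) ≤ paperF z α :=
  le_add_of_nonneg_right (mul_nonneg (rpow_nonneg hz.le _)
    (setIntegral_nonneg measurableSet_Ioo fun _ ht =>
      mul_nonneg (rpow_nonneg ht.1.le _) (exp_pos _).le))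

lemma paperF_pos {z : ℝ} (hz : 0 < z) : 0 < paperF z α :=
  (exp_pos _).trans_le (exp_neg_le_paperF hz)

lemma exists_pos_mul_rpow_le_paperF (hα : 2 < α) :
    ∃ K > 0, ∀ z, 1 ≤ z → K * z ^ (2 / α) ≤ paperF z α := by
  have : NeZero (volume.restrict (Ioo (0 : ℝ) 1)) := ⟨by simp [Measure.restrict_eq_zero]⟩
  refine ⟨∫ t in Ioo 0 1, t ^ (-(2 / α)) * exp (-t), integral_pos_of_ae_pos
    ((integrableOn_paperF_integrand hα).mono_set Ioo_subset_Ioi_self)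
    ((ae_restrict_iff' measurableSet_Ioo).2 (Eventually.of_forall fun _ ht =>
      mul_pos (rpow_pos_of_pos ht.1 _) (exp_pos _))), fun z hz => ?_⟩
  calc _ = z ^ (2 / α) * ∫ t in Ioo 0 1, t ^ (-(2 / α)) * exp (-t) := mul_comm _ _
    _ ≤ z ^ (2 / α) * ∫ t in Ioo 0 z, t ^ (-(2 / α)) * exp (-t) :=
        mul_le_mul_of_nonneg_left (monotone_paperF_integral hα hz) (rpow_nonneg (by linarith) _)
    _ ≤ paperF z α := le_add_of_nonneg_left (exp_pos _).le

end PaperF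

noncomputable def rateIntegrand (α a z : ℝ) : ℝ := (1 - exp (-(z * a))) / (z * paperF z α)

section RateIntegrand

variable {α a : ℝ}

lemma measurable_rateIntegrand (hα : 2 < α) : Measurable (rateIntegrand α a) :=
  (measurable_const.sub (measurable_id.mul_const a).neg.exp).div
    (measurable_id.mul (measurable_paperF hα))

lemma rateIntegrand_nonneg (ha : 0 ≤ a) {z : ℝ} (hz : 0 < z) : 0 ≤ rateIntegrand α a z :=
  div_nonneg (sub_nonneg.2 (exp_le_one_iff.2 (by nlinarith)))
    (mul_pos hz (paperF_pos hz)).le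

lemma rateIntegrand_le_mul_exp_one (ha : 0 ≤ a) {z : ℝ} (hz : z ∈ Ioc 0 1) :
    rateIntegrand α a z ≤ a * exp 1 := by
  have hF : exp (-1) ≤ paperF z α :=
    (exp_le_exp.2 (by linarith [hz.2])).trans (exp_neg_le_paperF hz.1)
  calc rateIntegrand α a z ≤ z * a / (z * exp (-1)) :=
        div_le_div₀ (mul_nonneg hz.1.le ha) (by linarith [add_one_le_exp (-(z * a))])
          (mul_pos hz.1 (exp_pos _)) (mul_le_mul_of_nonneg_left hF hz.1.le)
    _ = a * exp 1 := by rw [exp_neg]; field_simp [hz.1.ne']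

lemma rateIntegrand_le_rpow {K z : ℝ} (hK : 0 < K) (hF : K * z ^ (2 / α) ≤ paperF z α)
    (hz : 0 < z) : rateIntegrand α a z ≤ K⁻¹ * z ^ (-(1 + 2 / α)) := by
  have hzF : K * z ^ (1 + 2 / α) ≤ z * paperF z α := by
    rw [rpow_add hz, rpow_one, mul_left_comm]
    exact mul_le_mul_of_nonneg_left hF hz.le
  calc rateIntegrand α a z ≤ 1 / (K * z ^ (1 + 2 / α)) :=
        div_le_div₀ zero_le_one (by linarith [exp_pos (-(z * a))])
          (mul_pos hK (rpow_pos_of_pos hz _)) hzF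
    _ = K⁻¹ * z ^ (-(1 + 2 / α)) := by rw [rpow_neg hz.le, one_div, mul_inv]

lemma integrableOn_rateIntegrand (hα : 2 < α) (ha : 0 ≤ a) :
    IntegrableOn (rateIntegrand α a) (Ioi 0) := by
  have hmeas := (measurable_rateIntegrand (a := a) hα).aestronglyMeasurable (μ := volume)
  rw [← Ioc_union_Ioi_eq_Ioi zero_le_one]
  refine IntegrableOn.union ?_ ?_
  · refine Integrable.mono' (integrableOn_const (C := a * exp 1) (by simp)) hmeas.restrict
      ((ae_restrict_iff' measurableSet_Ioc).2 (Eventually.of_forall fun z hz => ?_))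
    rw [norm_of_nonneg (rateIntegrand_nonneg ha hz.1)]
    exact rateIntegrand_le_mul_exp_one ha hz
  · obtain ⟨K, hK, hF⟩ := exists_pos_mul_rpow_le_paperF hα
    refine Integrable.mono' ((integrableOn_Ioi_rpow_of_lt (a := -(1 + 2 / α))
        (by linarith [show 0 < 2 / α by positivity]) one_pos).const_mul K⁻¹) hmeas.restrict
      ((ae_restrict_iff' measurableSet_Ioi).2 (Eventually.of_forall fun z hz => ?_))
    have hz0 : 0 < z := one_pos.trans hz
    rw [norm_of_nonneg (rateIntegrand_nonneg ha hz0)]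
    exact rateIntegrand_le_rpow hK (hF z hz.le) hz0

end RateIntegrand

/-- For every `α > 2`, the function
`φ(a) = ∫₀^∞ (1 − e^{−za})/(z F(z,α)) dz` is strictly increasing and strictly concave
on `[0, ∞)`. -/
theorem rate_strictMono_strictConcave (α : ℝ) (hα : 2 < α) :
    StrictMonoOn
        (fun a : ℝ => ∫ z in Set.Ioi (0 : ℝ), (1 - Real.exp (-(z * a))) / (z * paperF z α))
        (Set.Ici 0)
      ∧ StrictConcaveOn ℝ (Set.Ici 0)
        (fun a : ℝ => ∫ z in Set.Ioi (0 : ℝ), (1 - Real.exp (-(z * a))) / (z * paperF z α)) := by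
  have : NeZero (volume.restrict (Ioi (0 : ℝ))) := ⟨by simp [Measure.restrict_eq_zero]⟩
  have hint : ∀ a ∈ Ici (0 : ℝ), Integrable (rateIntegrand α a) (volume.restrict (Ioi 0)) :=
    fun a ha => integrableOn_rateIntegrand hα ha
  have hdenom : ∀ z ∈ Ioi (0 : ℝ), 0 < z * paperF z α := fun z hz => mul_pos hz (paperF_pos hz)
  refine ⟨strictMonoOn_integral hint ?_, strictConcaveOn_integral hint ?_⟩
  · exact (ae_restrict_iff' measurableSet_Ioi).2 (Eventually.of_forall fun z hz =>
      (strictMono_one_sub_exp_neg_mul_div hz (hdenom z hz)).strictMonoOn _)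
  · exact (ae_restrict_iff' measurableSet_Ioi).2 (Eventually.of_forall fun z hz =>
      (strictConcaveOn_one_sub_exp_neg_mul_div hz (hdenom z hz)).subset (subset_univ _)
        (convex_Ici 0))
end

section
/- Let α > 2 be real and L ≥ 1 be real. Then there exists a unique v ∈ (0, 1/L) such that ∫₀^∞ (1 − e^{−z(1/v − L)} − (z/v) e^{−z(1/v − L)}) / (z F(z,α)) dz = 0. -/
open MeasureTheory

/-!
Put `ε = 1/v − L > 0`. The integral becomes `A(ε) − (L + ε) Λ(ε)` with
`A(ε) = ∫ (1 − e^{−εz})/(z F)` and `Λ(ε) = ∫ e^{−εz}/F`. Its integrand increases strictly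
in `ε`, because `(1 + a + t) e^{−t} < 1 + a` for `a ≥ 0` and `t > 0`, and dominated
convergence makes it continuous in `ε`. The bounds `e^{−1} ≤ F ≤ 1 + Γ(1 − 2/α)` on `(0, 1]`
and `F(z) ≥ e^{−1} z^{2/α}` on `[1, ∞)` give `A(ε) → 0` as `ε → 0` while `Λ` stays bounded
below on `(0, 1]`, so the integral is negative for small `ε`; and `A(ε) ≥ c log ε` while
`(L + ε) Λ(ε) ≤ e (L + 1)`, so it tends to `+∞`. The intermediate value theorem gives the zero.
-/

open Set Real Filter Topology

namespace OptimalUserLoading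

theorem setIntegral_lt_setIntegral_of_forall_lt {X : Type*} [MeasurableSpace X] {μ : Measure X}
    {s : Set X} {f g : X → ℝ} (hs : MeasurableSet s) (hμs : μ s ≠ 0)
    (hf : IntegrableOn f s μ) (hg : IntegrableOn g s μ) (hfg : ∀ x ∈ s, f x < g x) :
    ∫ x in s, f x ∂μ < ∫ x in s, g x ∂μ := by
  rw [← sub_pos, ← integral_sub hg hf]
  have hsupp : Function.support (fun x => g x - f x) ∩ s = s :=
    inter_eq_right.2 fun x hx => (sub_pos.2 (hfg x hx)).ne'
  rw [setIntegral_pos_iff_support_of_nonneg_ae (f := fun x => g x - f x) _ (hg.sub hf), hsupp]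
  · exact pos_iff_ne_zero.2 hμs
  · filter_upwards [ae_restrict_mem hs] with x hx using (sub_pos.2 (hfg x hx)).le

theorem one_add_add_mul_exp_neg_lt {a t : ℝ} (ha : 0 ≤ a) (ht : 0 < t) :
    (1 + a + t) * exp (-t) < 1 + a := by
  have hexp : t + 1 < exp t := add_one_lt_exp ht.ne'
  rw [exp_neg, ← div_eq_mul_inv, div_lt_iff₀ (exp_pos t)]
  nlinarith

theorem setIntegral_Ioo_rpow_neg_mul_exp_neg_nonneg (p z : ℝ) :
    0 ≤ ∫ t in Ioo 0 z, t ^ (-p) * exp (-t) :=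
  setIntegral_nonneg measurableSet_Ioo fun _ ht => mul_nonneg (rpow_nonneg ht.1.le _) (exp_pos _).le

section IncompleteGamma

variable {p : ℝ}

theorem integrableOn_rpow_neg_mul_exp_neg (hp : p < 1) :
    IntegrableOn (fun t : ℝ => t ^ (-p) * exp (-t)) (Ioi 0) :=
  (GammaIntegral_convergent (sub_pos.2 hp)).congr_fun
    (fun t _ => by rw [mul_comm, sub_sub_cancel_left]) measurableSet_Ioi

theorem setIntegral_Ioo_rpow_neg_mul_exp_neg_le_Gamma (hp : p < 1) (z : ℝ) :
    ∫ t in Ioo 0 z, t ^ (-p) * exp (-t) ≤ Gamma (1 - p) := by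
  rw [Gamma_eq_integral (sub_pos.2 hp)]
  calc ∫ t in Ioo 0 z, t ^ (-p) * exp (-t)
      ≤ ∫ t in Ioi 0, t ^ (-p) * exp (-t) :=
        setIntegral_mono_set (integrableOn_rpow_neg_mul_exp_neg hp)
          (ae_restrict_of_forall_mem measurableSet_Ioi fun t ht =>
            mul_nonneg (rpow_nonneg (le_of_lt ht) _) (exp_pos _).le)
          Ioo_subset_Ioi_self.eventuallyLE
    _ = ∫ t in Ioi 0, exp (-t) * t ^ (1 - p - 1) := by
        congr 1; ext t; rw [mul_comm, sub_sub_cancel_left]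

theorem exp_neg_one_le_setIntegral_Ioo_rpow_neg_mul_exp_neg (hp₀ : 0 ≤ p) (hp : p < 1)
    {z : ℝ} (hz : 1 ≤ z) : exp (-1) ≤ ∫ t in Ioo 0 z, t ^ (-p) * exp (-t) := by
  have hint := integrableOn_rpow_neg_mul_exp_neg hp
  calc exp (-1) = ∫ _ in Ioo (0 : ℝ) 1, exp (-1) := by simp
    _ ≤ ∫ t in Ioo 0 1, t ^ (-p) * exp (-t) := by
        refine setIntegral_mono_on (integrableOn_const measure_Ioo_lt_top.ne)
          (hint.mono_set Ioo_subset_Ioi_self) measurableSet_Ioo fun t ht => ?_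
        have h1 : 1 ≤ t ^ (-p) :=
          one_le_rpow_of_pos_of_le_one_of_nonpos ht.1 ht.2.le (by linarith)
        have h2 : exp (-1) ≤ exp (-t) := exp_le_exp.2 (by linarith [ht.2])
        nlinarith [exp_pos (-1)]
    _ ≤ ∫ t in Ioo 0 z, t ^ (-p) * exp (-t) :=
        setIntegral_mono_set (hint.mono_set Ioo_subset_Ioi_self)
          (ae_restrict_of_forall_mem measurableSet_Ioo fun t ht =>
            mul_nonneg (rpow_nonneg ht.1.le _) (exp_pos _).le)
          (Ioo_subset_Ioo_right hz).eventuallyLE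

end IncompleteGamma

section PaperF

variable {α : ℝ}

theorem two_div_lt_one (hα : 2 < α) : 2 / α < 1 := (div_lt_one (by linarith)).2 hα

theorem two_div_nonneg (hα : 2 < α) : 0 ≤ 2 / α := div_nonneg zero_le_two (by linarith)

theorem Gamma_one_sub_two_div_pos (hα : 2 < α) : 0 < Gamma (1 - 2 / α) :=
  Gamma_pos_of_pos (sub_pos.2 (two_div_lt_one hα))

theorem paperF_pos {z : ℝ} (hz : 0 < z) : 0 < paperF z α := by
  have := setIntegral_Ioo_rpow_neg_mul_exp_neg_nonneg (2 / α) z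
  unfold paperF
  positivity

theorem exp_neg_one_mul_rpow_le_paperF (hα : 2 < α) {z : ℝ} (hz : 1 ≤ z) :
    exp (-1) * z ^ (2 / α) ≤ paperF z α := by
  have hI := exp_neg_one_le_setIntegral_Ioo_rpow_neg_mul_exp_neg
    (two_div_nonneg hα) (two_div_lt_one hα) hz
  have hzp : 0 ≤ z ^ (2 / α) := rpow_nonneg (by linarith) _
  unfold paperF
  nlinarith [exp_pos (-z)]

theorem exp_neg_one_le_paperF (hα : 2 < α) {z : ℝ} (hz : 0 < z) : exp (-1) ≤ paperF z α := by
  rcases le_total z 1 with hz1 | hz1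
  · have := setIntegral_Ioo_rpow_neg_mul_exp_neg_nonneg (2 / α) z
    have : exp (-1) ≤ exp (-z) := exp_le_exp.2 (by linarith)
    unfold paperF
    nlinarith [rpow_nonneg hz.le (2 / α)]
  · have : 1 ≤ z ^ (2 / α) := one_le_rpow hz1 (two_div_nonneg hα)
    nlinarith [exp_neg_one_mul_rpow_le_paperF hα hz1, exp_pos (-1)]

theorem inv_paperF_le_exp_one (hα : 2 < α) {z : ℝ} (hz : 0 < z) : (paperF z α)⁻¹ ≤ exp 1 :=
  (inv_le_comm₀ (paperF_pos hz) (exp_pos 1)).2 <| by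
    rw [← exp_neg]; exact exp_neg_one_le_paperF hα hz

theorem paperF_le_one_add_Gamma (hα : 2 < α) {z : ℝ} (hz : 0 < z) (hz1 : z ≤ 1) :
    paperF z α ≤ 1 + Gamma (1 - 2 / α) := by
  have hI := setIntegral_Ioo_rpow_neg_mul_exp_neg_le_Gamma (two_div_lt_one hα) z
  have hzp : z ^ (2 / α) ≤ 1 := rpow_le_one hz.le hz1 (two_div_nonneg hα)
  have := setIntegral_Ioo_rpow_neg_mul_exp_neg_nonneg (2 / α) z
  have : exp (-z) ≤ 1 := exp_le_one_iff.2 (by linarith)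
  unfold paperF
  nlinarith [rpow_nonneg hz.le (2 / α)]

theorem continuousOn_paperF (hα : 2 < α) : ContinuousOn (fun z => paperF z α) (Ioi 0) := by
  have hp : -(2 / α) > -1 := by linarith [two_div_lt_one hα]
  have hprim : Continuous fun z => ∫ t in (0 : ℝ)..z, t ^ (-(2 / α)) * exp (-t) :=
    intervalIntegral.continuous_primitive (fun a b =>
      (intervalIntegral.intervalIntegrable_rpow' hp).mul_continuousOn (by fun_prop)) 0
  have hI : ContinuousOn (fun z => ∫ t in Ioo 0 z, t ^ (-(2 / α)) * exp (-t)) (Ioi 0) :=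
    hprim.continuousOn.congr fun z hz => by
      rw [← integral_Ioc_eq_integral_Ioo, ← intervalIntegral.integral_of_le (le_of_lt hz)]
  exact (continuous_exp.comp continuous_neg).continuousOn.add
    ((continuousOn_id.rpow_const fun z hz => Or.inl (ne_of_gt hz)).mul hI)

end PaperF

section Integrals

variable {α : ℝ}

noncomputable def laplaceInvPaperF (α ε : ℝ) : ℝ :=
  ∫ z in Ioi 0, exp (-(z * ε)) / paperF z α

noncomputable def oneSubExpIntegral (α ε : ℝ) : ℝ :=
  ∫ z in Ioi 0, (1 - exp (-(z * ε))) / (z * paperF z α)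

/-- The paper's `G′(v)` at `v = 1 / (L + ε)`. -/
noncomputable def marginalGain (α L ε : ℝ) : ℝ :=
  ∫ z in Ioi 0, (1 - exp (-(z * ε)) - z * (L + ε) * exp (-(z * ε))) / (z * paperF z α)

theorem continuousOn_div_paperF (hα : 2 < α) {f : ℝ → ℝ} (hf : Continuous f) :
    ContinuousOn (fun z => f z / paperF z α) (Ioi 0) :=
  hf.continuousOn.div (continuousOn_paperF hα) fun _ hz => (paperF_pos hz).ne'

theorem continuousOn_div_mul_paperF (hα : 2 < α) {f : ℝ → ℝ} (hf : Continuous f) :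
    ContinuousOn (fun z => f z / (z * paperF z α)) (Ioi 0) :=
  hf.continuousOn.div (continuousOn_id.mul (continuousOn_paperF hα))
    fun _ hz => (mul_pos hz (paperF_pos hz)).ne'

theorem exp_neg_mul_div_paperF_le (hα : 2 < α) (ε : ℝ) {z : ℝ} (hz : 0 < z) :
    exp (-(z * ε)) / paperF z α ≤ exp 1 * exp (-ε * z) := by
  rw [div_eq_mul_inv, mul_comm, neg_mul, mul_comm ε]
  exact mul_le_mul_of_nonneg_right (inv_paperF_le_exp_one hα hz) (exp_pos _).le

theorem integrableOn_exp_neg_mul_div_paperF (hα : 2 < α) {ε : ℝ} (hε : 0 < ε) :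
    IntegrableOn (fun z => exp (-(z * ε)) / paperF z α) (Ioi 0) := by
  refine ((exp_neg_integrableOn_Ioi 0 hε).const_mul (exp 1)).mono'
    ((continuousOn_div_paperF hα (by fun_prop)).aestronglyMeasurable measurableSet_Ioi) ?_
  filter_upwards [ae_restrict_mem measurableSet_Ioi] with z hz
  rw [norm_of_nonneg (div_nonneg (exp_pos _).le (paperF_pos hz).le)]
  exact exp_neg_mul_div_paperF_le hα ε hz

theorem one_sub_exp_neg_mul_div_mul_paperF_nonneg {ε z : ℝ} (hε : 0 ≤ ε) (hz : 0 < z) :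
    0 ≤ (1 - exp (-(z * ε))) / (z * paperF z α) :=
  div_nonneg (sub_nonneg.2 (exp_le_one_iff.2 (by nlinarith))) (mul_pos hz (paperF_pos hz)).le

theorem integrableOn_one_sub_exp_neg_mul_div_mul_paperF (hα : 2 < α) {ε : ℝ} (hε : 0 ≤ ε) :
    IntegrableOn (fun z => (1 - exp (-(z * ε))) / (z * paperF z α)) (Ioi 0) := by
  have hmeas := continuousOn_div_mul_paperF hα (f := fun z => 1 - exp (-(z * ε))) (by fun_prop)
  rw [← Ioc_union_Ioi_eq_Ioi zero_le_one]
  refine IntegrableOn.union ?_ ?_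
  · refine (integrableOn_const (C := ε * exp 1) measure_Ioc_lt_top.ne).mono'
      ((hmeas.mono Ioc_subset_Ioi_self).aestronglyMeasurable measurableSet_Ioc) ?_
    filter_upwards [ae_restrict_mem measurableSet_Ioc] with z hz
    rw [norm_of_nonneg (one_sub_exp_neg_mul_div_mul_paperF_nonneg hε hz.1)]
    have hF := paperF_pos (α := α) hz.1
    have hz0 := hz.1.ne'
    calc (1 - exp (-(z * ε))) / (z * paperF z α) ≤ z * ε / (z * paperF z α) :=
          div_le_div_of_nonneg_right (by linarith [add_one_le_exp (-(z * ε))])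
            (mul_pos hz.1 hF).le
      _ = ε * (paperF z α)⁻¹ := by field_simp
      _ ≤ ε * exp 1 := mul_le_mul_of_nonneg_left (inv_paperF_le_exp_one hα hz.1) hε
  · have hp : -(1 + 2 / α) < -1 := by linarith [div_pos two_pos (by linarith : (0 : ℝ) < α)]
    refine (((integrableOn_Ioi_rpow_iff zero_lt_one).2 hp).const_mul (exp 1)).mono'
      ((hmeas.mono (Ioi_subset_Ioi zero_le_one)).aestronglyMeasurable measurableSet_Ioi) ?_
    filter_upwards [ae_restrict_mem measurableSet_Ioi] with z hz
    have hz0 : 0 < z := zero_lt_one.trans hz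
    rw [norm_of_nonneg (one_sub_exp_neg_mul_div_mul_paperF_nonneg hε hz0)]
    calc (1 - exp (-(z * ε))) / (z * paperF z α) ≤ 1 / (z * (exp (-1) * z ^ (2 / α))) :=
          div_le_div₀ zero_le_one (by linarith [exp_pos (-(z * ε))]) (by positivity)
            (mul_le_mul_of_nonneg_left (exp_neg_one_mul_rpow_le_paperF hα hz.le) hz0.le)
      _ = exp 1 * z ^ (-(1 + 2 / α)) := by
          rw [rpow_neg hz0.le, rpow_add hz0, rpow_one, exp_neg]
          field_simp

theorem marginalGain_integrand_eq {L ε z : ℝ} (hz : 0 < z) :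
    (1 - exp (-(z * ε)) - z * (L + ε) * exp (-(z * ε))) / (z * paperF z α) =
      (1 - exp (-(z * ε))) / (z * paperF z α) - (L + ε) * (exp (-(z * ε)) / paperF z α) := by
  have := (paperF_pos (α := α) hz).ne'
  field_simp

theorem integrableOn_marginalGain_integrand (hα : 2 < α) (L : ℝ) {ε : ℝ} (hε : 0 < ε) :
    IntegrableOn (fun z => (1 - exp (-(z * ε)) - z * (L + ε) * exp (-(z * ε))) /
      (z * paperF z α)) (Ioi 0) :=
  ((integrableOn_one_sub_exp_neg_mul_div_mul_paperF hα hε.le).sub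
    ((integrableOn_exp_neg_mul_div_paperF hα hε).const_mul (L + ε))).congr_fun
    (fun _ hz => (marginalGain_integrand_eq hz).symm) measurableSet_Ioi

theorem marginalGain_eq (hα : 2 < α) (L : ℝ) {ε : ℝ} (hε : 0 < ε) :
    marginalGain α L ε = oneSubExpIntegral α ε - (L + ε) * laplaceInvPaperF α ε := by
  rw [marginalGain,
    setIntegral_congr_fun measurableSet_Ioi fun _ hz => marginalGain_integrand_eq hz,
    integral_sub (integrableOn_one_sub_exp_neg_mul_div_mul_paperF hα hε.le)
      ((integrableOn_exp_neg_mul_div_paperF hα hε).const_mul _), integral_const_mul]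
  rfl

theorem laplaceInvPaperF_le (hα : 2 < α) {ε : ℝ} (hε : 0 < ε) :
    laplaceInvPaperF α ε ≤ exp 1 / ε :=
  calc laplaceInvPaperF α ε ≤ ∫ z in Ioi 0, exp 1 * exp (-ε * z) :=
        setIntegral_mono_on (integrableOn_exp_neg_mul_div_paperF hα hε)
          ((exp_neg_integrableOn_Ioi 0 hε).const_mul _) measurableSet_Ioi
          fun _ hz => exp_neg_mul_div_paperF_le hα ε hz
    _ = exp 1 / ε := by
        rw [integral_const_mul, integral_exp_mul_Ioi (neg_lt_zero.2 hε)]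
        field_simp
        simp

theorem exp_neg_one_div_le_laplaceInvPaperF (hα : 2 < α) {ε : ℝ} (hε : 0 < ε) (hε₁ : ε ≤ 1) :
    exp (-1) / (1 + Gamma (1 - 2 / α)) ≤ laplaceInvPaperF α ε := by
  have hint := integrableOn_exp_neg_mul_div_paperF hα hε
  calc exp (-1) / (1 + Gamma (1 - 2 / α))
      = ∫ _ in Ioc (0 : ℝ) 1, exp (-1) / (1 + Gamma (1 - 2 / α)) := by simp
    _ ≤ ∫ z in Ioc 0 1, exp (-(z * ε)) / paperF z α :=
        setIntegral_mono_on (integrableOn_const measure_Ioc_lt_top.ne)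
          (hint.mono_set Ioc_subset_Ioi_self) measurableSet_Ioc fun z hz =>
          div_le_div₀ (exp_pos _).le (exp_le_exp.2 (by nlinarith [hz.1, hz.2])) (paperF_pos hz.1)
            (paperF_le_one_add_Gamma hα hz.1 hz.2)
    _ ≤ laplaceInvPaperF α ε :=
        setIntegral_mono_set hint
          (ae_restrict_of_forall_mem measurableSet_Ioi fun z hz =>
            div_nonneg (exp_pos _).le (paperF_pos hz).le)
          Ioc_subset_Ioi_self.eventuallyLE

theorem log_le_oneSubExpIntegral (hα : 2 < α) {ε : ℝ} (hε : 1 ≤ ε) :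
    (1 - exp (-1)) / (1 + Gamma (1 - 2 / α)) * log ε ≤ oneSubExpIntegral α ε := by
  set C := 1 + Gamma (1 - 2 / α)
  have hC : 0 < C := by linarith [Gamma_one_sub_two_div_pos hα]
  have hε₀ : 0 < ε⁻¹ := inv_pos.2 (by linarith)
  have hε₁ : ε⁻¹ ≤ 1 := inv_le_one_of_one_le₀ hε
  calc (1 - exp (-1)) / C * log ε = ∫ z in Ioc ε⁻¹ 1, (1 - exp (-1)) / C * z⁻¹ := by
        rw [integral_const_mul, ← intervalIntegral.integral_of_le hε₁,
          integral_inv_of_pos hε₀ one_pos, one_div, inv_inv]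
    _ ≤ ∫ z in Ioc ε⁻¹ 1, (1 - exp (-(z * ε))) / (z * paperF z α) := by
        refine setIntegral_mono_on ?_
          ((integrableOn_one_sub_exp_neg_mul_div_mul_paperF hα (by linarith)).mono_set
            (Ioc_subset_Ioi_self.trans (Ioi_subset_Ioi hε₀.le))) measurableSet_Ioc
          fun z hz => ?_
        · exact (continuousOn_const.mul (continuousOn_inv₀.mono fun x hx =>
            (hε₀.trans_le hx.1).ne')).integrableOn_Icc.mono_set Ioc_subset_Icc_self
        have hz₀ : 0 < z := hε₀.trans hz.1
        have hzε : 1 < z * ε := by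
          simpa [inv_mul_cancel₀ (by linarith : ε ≠ 0)] using
            mul_lt_mul_of_pos_right hz.1 (by linarith : 0 < ε)
        rw [← div_eq_mul_inv, div_div, mul_comm C]
        exact div_le_div₀ (sub_nonneg.2 (exp_le_one_iff.2 (by linarith)))
          (sub_le_sub_left (exp_le_exp.2 (by linarith)) 1) (mul_pos hz₀ (paperF_pos hz₀))
          (mul_le_mul_of_nonneg_left (paperF_le_one_add_Gamma hα hz₀ hz.2) hz₀.le)
    _ ≤ oneSubExpIntegral α ε :=
        setIntegral_mono_set (integrableOn_one_sub_exp_neg_mul_div_mul_paperF hα (by linarith))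
          (ae_restrict_of_forall_mem measurableSet_Ioi fun _ hz =>
            one_sub_exp_neg_mul_div_mul_paperF_nonneg (by linarith) hz)
          (Ioc_subset_Ioi_self.trans (Ioi_subset_Ioi hε₀.le)).eventuallyLE

theorem continuousOn_oneSubExpIntegral (hα : 2 < α) {b : ℝ} (hb : 0 ≤ b) :
    ContinuousOn (oneSubExpIntegral α) (Icc 0 b) := by
  refine continuousOn_of_dominated (fun _ _ => (continuousOn_div_mul_paperF hα
    (by fun_prop)).aestronglyMeasurable measurableSet_Ioi) (fun ε hε => ?_)
    (integrableOn_one_sub_exp_neg_mul_div_mul_paperF hα hb)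
    (ae_of_all _ fun z => (by fun_prop : Continuous _).continuousOn)
  filter_upwards [ae_restrict_mem measurableSet_Ioi] with z hz
  rw [norm_of_nonneg (one_sub_exp_neg_mul_div_mul_paperF_nonneg hε.1 hz)]
  exact div_le_div_of_nonneg_right
    (sub_le_sub_left (exp_le_exp.2 (by nlinarith [hε.2, mem_Ioi.1 hz])) 1)
    (mul_pos hz (paperF_pos hz)).le

theorem continuousOn_laplaceInvPaperF (hα : 2 < α) {a : ℝ} (ha : 0 < a) :
    ContinuousOn (laplaceInvPaperF α) (Ici a) := by
  refine continuousOn_of_dominated (fun _ _ => (continuousOn_div_paperF hα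
    (by fun_prop)).aestronglyMeasurable measurableSet_Ioi) (fun ε hε => ?_)
    (integrableOn_exp_neg_mul_div_paperF hα ha)
    (ae_of_all _ fun z => (by fun_prop : Continuous _).continuousOn)
  filter_upwards [ae_restrict_mem measurableSet_Ioi] with z hz
  rw [norm_of_nonneg (div_nonneg (exp_pos _).le (paperF_pos hz).le)]
  exact div_le_div_of_nonneg_right (exp_le_exp.2 (by nlinarith [mem_Ici.1 hε, mem_Ioi.1 hz]))
    (paperF_pos hz).le

theorem continuousOn_marginalGain (hα : 2 < α) (L : ℝ) :
    ContinuousOn (marginalGain α L) (Ioi 0) := by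
  intro ε hε
  have hA : ContinuousAt (oneSubExpIntegral α) ε :=
    (continuousOn_oneSubExpIntegral hα (b := ε + 1) (by linarith [mem_Ioi.1 hε])).continuousAt
      (Icc_mem_nhds hε (by linarith))
  have hΛ : ContinuousAt (laplaceInvPaperF α) ε :=
    (continuousOn_laplaceInvPaperF hα (half_pos hε)).continuousAt
      (Ici_mem_nhds (half_lt_self hε))
  refine ContinuousAt.continuousWithinAt ?_
  exact (hA.sub ((continuousAt_const.add continuousAt_id).mul hΛ)).congr
    (eventually_of_mem (Ioi_mem_nhds hε) fun _ h => (marginalGain_eq hα L h).symm)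

theorem marginalGain_integrand_lt {L ε₁ ε₂ z : ℝ} (hL : 0 ≤ L) (hε₁ : 0 ≤ ε₁) (h : ε₁ < ε₂)
    (hz : 0 < z) :
    (1 - exp (-(z * ε₁)) - z * (L + ε₁) * exp (-(z * ε₁))) / (z * paperF z α) <
      (1 - exp (-(z * ε₂)) - z * (L + ε₂) * exp (-(z * ε₂))) / (z * paperF z α) := by
  refine div_lt_div_of_pos_right ?_ (mul_pos hz (paperF_pos hz))
  have key := one_add_add_mul_exp_neg_lt (a := z * (L + ε₁)) (t := z * (ε₂ - ε₁))
    (by positivity) (mul_pos hz (sub_pos.2 h))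
  have hexp : exp (-(z * ε₂)) = exp (-(z * (ε₂ - ε₁))) * exp (-(z * ε₁)) := by
    rw [← exp_add]; ring_nf
  rw [hexp]
  nlinarith [mul_lt_mul_of_pos_right key (exp_pos (-(z * ε₁)))]

theorem strictMonoOn_marginalGain (hα : 2 < α) {L : ℝ} (hL : 0 ≤ L) :
    StrictMonoOn (marginalGain α L) (Ioi 0) := fun _ h₁ _ h₂ h =>
  setIntegral_lt_setIntegral_of_forall_lt measurableSet_Ioi (by simp)
    (integrableOn_marginalGain_integrand hα L h₁) (integrableOn_marginalGain_integrand hα L h₂)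
    fun _ hz => marginalGain_integrand_lt hL (le_of_lt h₁) h hz

theorem tendsto_marginalGain_atTop (hα : 2 < α) {L : ℝ} (hL : 0 ≤ L) :
    Tendsto (marginalGain α L) atTop atTop := by
  have hc : 0 < (1 - exp (-1)) / (1 + Gamma (1 - 2 / α)) := by
    have := Gamma_one_sub_two_div_pos hα
    have : exp (-1) < 1 := exp_lt_one_iff.2 (by norm_num)
    apply div_pos <;> linarith
  refine tendsto_atTop_mono' atTop ?_
    ((tendsto_log_atTop.const_mul_atTop hc).atTop_add
      (tendsto_const_nhds (x := -(exp 1 * (L + 1)))))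
  filter_upwards [eventually_ge_atTop 1] with ε hε
  have hε₀ : 0 < ε := by linarith
  have hΛ : (L + ε) * laplaceInvPaperF α ε ≤ exp 1 * (L + 1) :=
    calc (L + ε) * laplaceInvPaperF α ε ≤ (L + ε) * (exp 1 / ε) :=
          mul_le_mul_of_nonneg_left (laplaceInvPaperF_le hα hε₀) (by linarith)
      _ = exp 1 * (L / ε + 1) := by field_simp
      _ ≤ exp 1 * (L + 1) := by gcongr; exact div_le_self hL hε
  rw [marginalGain_eq hα L hε₀]
  linarith [log_le_oneSubExpIntegral hα hε]

theorem exists_marginalGain_neg (hα : 2 < α) {L : ℝ} (hL : 0 < L) :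
    ∃ ε > 0, marginalGain α L ε < 0 := by
  have hc : 0 < L * (exp (-1) / (1 + Gamma (1 - 2 / α))) := by
    have := Gamma_one_sub_two_div_pos hα
    positivity
  have hA : Tendsto (oneSubExpIntegral α) (𝓝[>] 0) (𝓝 0) := by
    have h := (continuousOn_oneSubExpIntegral hα zero_le_one 0
      (left_mem_Icc.2 zero_le_one)).tendsto
    rw [show oneSubExpIntegral α 0 = 0 by simp [oneSubExpIntegral]] at h
    exact h.mono_left (by
      rw [← nhdsWithin_Ioc_eq_nhdsGT zero_lt_one]; exact nhdsWithin_mono _ Ioc_subset_Icc_self)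
  obtain ⟨ε, hAε, hε₀, hε₁⟩ :=
    ((hA.eventually (gt_mem_nhds hc)).and (Ioc_mem_nhdsGT zero_lt_one)).exists
  have hΛ := exp_neg_one_div_le_laplaceInvPaperF hα hε₀ hε₁
  refine ⟨ε, hε₀, ?_⟩
  rw [marginalGain_eq hα L hε₀]
  nlinarith [mul_le_mul_of_nonneg_left hΛ hL.le]

theorem existsUnique_marginalGain_eq_zero (hα : 2 < α) {L : ℝ} (hL : 0 < L) :
    ∃! ε, 0 < ε ∧ marginalGain α L ε = 0 := by
  have hmono := strictMonoOn_marginalGain hα hL.le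
  obtain ⟨ε₁, hε₁, hneg⟩ := exists_marginalGain_neg hα hL
  obtain ⟨ε₂, hpos, hε₂⟩ := (((tendsto_marginalGain_atTop hα hL.le).eventually_gt_atTop 0).and
    (eventually_gt_atTop 0)).exists
  have h₁₂ : ε₁ ≤ ε₂ := (hmono.le_iff_le hε₁ hε₂).1 (by linarith)
  obtain ⟨ε, hε, hzero⟩ := intermediate_value_Icc h₁₂
    ((continuousOn_marginalGain hα L).mono fun _ hx => lt_of_lt_of_le hε₁ hx.1)
    ⟨hneg.le, hpos.le⟩
  have hε₀ : 0 < ε := lt_of_lt_of_le hε₁ hε.1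
  exact ⟨ε, ⟨hε₀, hzero⟩, fun δ hδ => hmono.injOn hδ.1 hε₀ (hδ.2.trans hzero.symm)⟩

end Integrals

end OptimalUserLoading

/-- **Lemma 2, optimal user loading.** For `α > 2` and `L ≥ 1` there is a
unique `v ∈ (0, 1/L)` solving the first-order optimality condition
`∫₀^∞ (1 − e^{−z(1/v − L)} − (z/v) e^{−z(1/v − L)})/(z F(z,α)) dz = 0`. -/
theorem optimal_user_loading_unique (α L : ℝ) (hα : 2 < α) (hL : 1 ≤ L) :
    ∃! v : ℝ, v ∈ Set.Ioo (0 : ℝ) (1 / L) ∧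
      ∫ z in Set.Ioi (0 : ℝ),
        (1 - Real.exp (-(z * (1 / v - L))) - (z / v) * Real.exp (-(z * (1 / v - L))))
          / (z * paperF z α) = 0 := by
  have hL₀ : 0 < L := by linarith
  have hgain : ∀ v : ℝ, (∫ z in Set.Ioi (0 : ℝ),
      (1 - Real.exp (-(z * (1 / v - L))) - (z / v) * Real.exp (-(z * (1 / v - L))))
        / (z * paperF z α)) = OptimalUserLoading.marginalGain α L (1 / v - L) := fun v => by
    unfold OptimalUserLoading.marginalGain
    congr 1; ext z; ring_nf
  obtain ⟨ε, ⟨hε, hzero⟩, huniq⟩ :=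
    OptimalUserLoading.existsUnique_marginalGain_eq_zero hα hL₀
  have hv : 1 / (1 / (L + ε)) - L = ε := by rw [one_div_one_div]; ring
  refine ⟨1 / (L + ε), ⟨⟨by positivity, one_div_lt_one_div_of_lt hL₀ (by linarith)⟩, ?_⟩, ?_⟩
  · rw [hgain, hv, hzero]
  rintro v ⟨⟨hv₀, hvL⟩, hv⟩
  rw [hgain] at hv
  rw [← huniq _ ⟨sub_pos.2 ((lt_one_div hL₀ hv₀).2 hvL), hv⟩, add_sub_cancel, one_div_one_div]
end
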